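/- arXiv:1402.4232 — 2 statements merged into one kernel-verified Lean document; each statement's English description precedes it below -/
import Mathlib

section
/- Let n ≥ 1, T > 0, let γ be a real constant, and let V, u : (0,T) × ℝⁿ → ℝ be smooth functions satisfying ∂_τ u = Δu − |∇u|² − V − γ·u on (0,T) × ℝⁿ. Then ∂_τ(|∇u|²) = Δ(|∇u|²) − 2·‖∇²u‖² − 2·⟨∇(|∇u|²), ∇u⟩ − 2·⟨∇V, ∇u⟩ − 2γ·|∇u|² on (0,T) × ℝⁿ. -/
open Set
open scoped RealInnerProductSpace

noncomputable section

/-- The `i`-th standard basis vector of `ℝⁿ`. -/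
def e (n : ℕ) (i : Fin n) : EuclideanSpace ℝ (Fin n) := EuclideanSpace.single i 1

/-- Spatial gradient of a time-dependent function on `ℝⁿ`. -/
def sgrad (n : ℕ) (u : ℝ → EuclideanSpace ℝ (Fin n) → ℝ) (t : ℝ)
    (x : EuclideanSpace ℝ (Fin n)) : EuclideanSpace ℝ (Fin n) :=
  gradient (u t) x

/-- `(i,j)` entry of the spatial Hessian of a time-dependent function on `ℝⁿ`. -/
def shess (n : ℕ) (u : ℝ → EuclideanSpace ℝ (Fin n) → ℝ) (t : ℝ)
    (x : EuclideanSpace ℝ (Fin n)) (i j : Fin n) : ℝ :=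
  fderiv ℝ (fun y => fderiv ℝ (u t) y (e n j)) x (e n i)

/-- Spatial Laplacian (trace of the spatial Hessian). -/
def slap (n : ℕ) (u : ℝ → EuclideanSpace ℝ (Fin n) → ℝ) (t : ℝ)
    (x : EuclideanSpace ℝ (Fin n)) : ℝ :=
  ∑ i, shess n u t x i i

/-- Squared Frobenius norm of the spatial Hessian. -/
def hessSq (n : ℕ) (u : ℝ → EuclideanSpace ℝ (Fin n) → ℝ) (t : ℝ)
    (x : EuclideanSpace ℝ (Fin n)) : ℝ :=
  ∑ i, ∑ j, (shess n u t x i j) ^ 2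

/-- Time derivative of a time-dependent function on `ℝⁿ`. -/
def tderiv (n : ℕ) (u : ℝ → EuclideanSpace ℝ (Fin n) → ℝ) (t : ℝ)
    (x : EuclideanSpace ℝ (Fin n)) : ℝ :=
  deriv (fun s => u s x) t

/-! ### Auxiliary lemmas -/

section Aux
variable {n : ℕ}

lemma inner_gradient (f : EuclideanSpace ℝ (Fin n) → ℝ) (x v : EuclideanSpace ℝ (Fin n)) :
    ⟪gradient f x, v⟫ = fderiv ℝ f x v :=
  InnerProductSpace.toDual_symm_apply

lemma gradient_coord (f : EuclideanSpace ℝ (Fin n) → ℝ) (x : EuclideanSpace ℝ (Fin n)) (i : Fin n) :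
    gradient f x i = fderiv ℝ f x (e n i) := by
  have h := inner_gradient f x (e n i)
  rw [← h, e, EuclideanSpace.inner_single_right]
  simp

lemma grad_inner (f g : EuclideanSpace ℝ (Fin n) → ℝ) (x : EuclideanSpace ℝ (Fin n)) :
    ⟪gradient f x, gradient g x⟫ = ∑ i, fderiv ℝ f x (e n i) * fderiv ℝ g x (e n i) := by
  rw [PiLp.inner_apply]
  simp only [RCLike.inner_apply, starRingEnd_apply, star_trivial]
  exact Finset.sum_congr rfl fun i _ => by rw [gradient_coord, gradient_coord, mul_comm]

lemma grad_norm_sq (f : EuclideanSpace ℝ (Fin n) → ℝ) (x : EuclideanSpace ℝ (Fin n)) :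
    ‖gradient f x‖ ^ 2 = ∑ i, (fderiv ℝ f x (e n i)) ^ 2 := by
  rw [← real_inner_self_eq_norm_sq, grad_inner]
  exact Finset.sum_congr rfl fun i _ => (sq _).symm

lemma fderiv_swap {P : Type*} [NormedAddCommGroup P] [NormedSpace ℝ P] {F : P → ℝ} {z : P}
    (hF : ContDiffAt ℝ (⊤ : ℕ∞) F z) (a b : P) :
    fderiv ℝ (fun w => fderiv ℝ F w a) z b = fderiv ℝ (fun w => fderiv ℝ F w b) z a := by
  have hsym : IsSymmSndFDerivAt ℝ F z := hF.isSymmSndFDerivAt (by rw [minSmoothness_of_isRCLikeNormedField]; exact WithTop.coe_le_coe.mpr le_top)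
  have hd : DifferentiableAt ℝ (fderiv ℝ F) z :=
    (hF.fderiv_right (m := 1) (WithTop.coe_le_coe.mpr le_top)).differentiableAt one_ne_zero
  have h1 : fderiv ℝ (fun w => fderiv ℝ F w a) z
      = (fderiv ℝ (fderiv ℝ F) z).flip a := by
    rw [show (fun w => fderiv ℝ F w a) = fun w => (fderiv ℝ F w) ((fun _ => a) w) from rfl,
      fderiv_clm_apply hd (differentiableAt_const a)]
    simp
  have h2 : fderiv ℝ (fun w => fderiv ℝ F w b) z
      = (fderiv ℝ (fderiv ℝ F) z).flip b := by
    rw [show (fun w => fderiv ℝ F w b) = fun w => (fderiv ℝ F w) ((fun _ => b) w) from rfl,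
      fderiv_clm_apply hd (differentiableAt_const b)]
    simp
  rw [h1, h2]
  exact hsym.eq b a

end Aux

section Slice
variable {n : ℕ} {T : ℝ}

lemma slice_contDiff {F : ℝ → EuclideanSpace ℝ (Fin n) → ℝ}
    (hF : ContDiffOn ℝ (⊤ : ℕ∞) (Function.uncurry F)
      (Ioo (0 : ℝ) T ×ˢ (univ : Set (EuclideanSpace ℝ (Fin n)))))
    {τ : ℝ} (hτ : τ ∈ Ioo (0 : ℝ) T) : ContDiff ℝ (⊤ : ℕ∞) (F τ) := by
  rw [← contDiffOn_univ]
  exact hF.comp ((contDiff_const.prodMk contDiff_id).contDiffOn)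
    (fun y _ => ⟨hτ, mem_univ _⟩)

lemma joint_spatial_fderiv {Φ : ℝ × EuclideanSpace ℝ (Fin n) → ℝ} {τ : ℝ}
    {x : EuclideanSpace ℝ (Fin n)} (hΦ : DifferentiableAt ℝ Φ (τ, x))
    (v : EuclideanSpace ℝ (Fin n)) :
    fderiv ℝ (fun y => Φ (τ, y)) x v = fderiv ℝ Φ (τ, x) (0, v) := by
  have h : HasFDerivAt (fun y => Φ (τ, y))
      ((fderiv ℝ Φ (τ, x)).comp (ContinuousLinearMap.inr ℝ ℝ (EuclideanSpace ℝ (Fin n)))) x :=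
    hΦ.hasFDerivAt.comp x (hasFDerivAt_prodMk_right τ x)
  rw [h.fderiv]
  rfl

lemma joint_time_deriv {Φ : ℝ × EuclideanSpace ℝ (Fin n) → ℝ} {τ : ℝ}
    {x : EuclideanSpace ℝ (Fin n)} (hΦ : DifferentiableAt ℝ Φ (τ, x)) :
    deriv (fun s => Φ (s, x)) τ = fderiv ℝ Φ (τ, x) (1, 0) := by
  have h : HasDerivAt (fun s => Φ (s, x)) (fderiv ℝ Φ (τ, x) (1, 0)) τ :=
    hΦ.hasFDerivAt.comp_hasDerivAt τ ((hasDerivAt_id τ).prodMk (hasDerivAt_const τ x))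
  exact h.deriv

end Slice

section Calc
variable {P : Type*} [NormedAddCommGroup P] [NormedSpace ℝ P]

lemma hasFDerivAt_sum_sq {ι : Type*} [Fintype ι] {f : ι → P → ℝ} {x : P}
    (hf : ∀ i, DifferentiableAt ℝ (f i) x) :
    HasFDerivAt (fun y => ∑ i, (f i y) ^ 2)
      (∑ i, (2 * f i x) • fderiv ℝ (f i) x) x := by
  have h : ∀ i ∈ Finset.univ, HasFDerivAt (fun y => (f i y) ^ 2)
      ((2 * f i x) • fderiv ℝ (f i) x) x := by
    intro i _
    have h1 := ((hf i).hasFDerivAt).mul ((hf i).hasFDerivAt)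
    have h2 : (fun y => (f i y) ^ 2) = fun y => f i y * f i y := by
      funext y; ring
    rw [h2, two_mul, add_smul]
    exact h1
  exact HasFDerivAt.fun_sum h

lemma fderiv_sum_sq_apply {ι : Type*} [Fintype ι] {f : ι → P → ℝ} {x : P}
    (hf : ∀ i, DifferentiableAt ℝ (f i) x) (v : P) :
    fderiv ℝ (fun y => ∑ i, (f i y) ^ 2) x v = ∑ i, 2 * f i x * fderiv ℝ (f i) x v := by
  rw [(hasFDerivAt_sum_sq hf).fderiv]
  simp [ContinuousLinearMap.sum_apply, mul_assoc]

lemma fderiv_sum_mul_apply {ι : Type*} [Fintype ι] {f g : ι → P → ℝ} {x : P}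
    (hf : ∀ i, DifferentiableAt ℝ (f i) x) (hg : ∀ i, DifferentiableAt ℝ (g i) x) (v : P) :
    fderiv ℝ (fun y => ∑ i, f i y * g i y) x v
      = ∑ i, (fderiv ℝ (f i) x v * g i x + f i x * fderiv ℝ (g i) x v) := by
  have h : ∀ i ∈ Finset.univ, HasFDerivAt (fun y => f i y * g i y)
      (f i x • fderiv ℝ (g i) x + g i x • fderiv ℝ (f i) x) x :=
    fun i _ => ((hf i).hasFDerivAt).mul ((hg i).hasFDerivAt)
  rw [(HasFDerivAt.fun_sum h).fderiv]
  simp only [ContinuousLinearMap.sum_apply, ContinuousLinearMap.add_apply,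
    ContinuousLinearMap.smul_apply, smul_eq_mul]
  exact Finset.sum_congr rfl fun i _ => by ring

lemma fderiv_sum_apply' {ι : Type*} [Fintype ι] {f : ι → P → ℝ} {x : P}
    (hf : ∀ i, DifferentiableAt ℝ (f i) x) (v : P) :
    fderiv ℝ (fun y => ∑ i, f i y) x v = ∑ i, fderiv ℝ (f i) x v := by
  have h : ∀ i ∈ Finset.univ, HasFDerivAt (f i) (fderiv ℝ (f i) x) x :=
    fun i _ => (hf i).hasFDerivAt
  rw [(HasFDerivAt.fun_sum h).fderiv]
  simp [ContinuousLinearMap.sum_apply]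

end Calc

/-- Lemma 3.1 (second identity), static flat case: evolution of `|∇u|²`. -/
theorem evolution_grad_norm_sq (n : ℕ) (hn : 1 ≤ n) (T γ : ℝ) (hT : 0 < T)
    (V u : ℝ → EuclideanSpace ℝ (Fin n) → ℝ)
    (hV : ContDiffOn ℝ (⊤ : ℕ∞) (Function.uncurry V)
      (Ioo (0 : ℝ) T ×ˢ (univ : Set (EuclideanSpace ℝ (Fin n)))))
    (hu : ContDiffOn ℝ (⊤ : ℕ∞) (Function.uncurry u)
      (Ioo (0 : ℝ) T ×ˢ (univ : Set (EuclideanSpace ℝ (Fin n)))))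
    (hpde : ∀ τ ∈ Ioo (0 : ℝ) T, ∀ x,
      tderiv n u τ x = slap n u τ x - ‖sgrad n u τ x‖ ^ 2 - V τ x - γ * u τ x) :
    ∀ τ ∈ Ioo (0 : ℝ) T, ∀ x,
      tderiv n (fun s y => ‖sgrad n u s y‖ ^ 2) τ x
        = slap n (fun s y => ‖sgrad n u s y‖ ^ 2) τ x
          - 2 * hessSq n u τ x
          - 2 * ⟪sgrad n (fun s y => ‖sgrad n u s y‖ ^ 2) τ x, sgrad n u τ x⟫
          - 2 * ⟪sgrad n V τ x, sgrad n u τ x⟫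
          - 2 * γ * ‖sgrad n u τ x‖ ^ 2 := by
  intro τ hτ x
  have hDopen : IsOpen (Ioo (0 : ℝ) T ×ˢ (univ : Set (EuclideanSpace ℝ (Fin n)))) :=
    isOpen_Ioo.prod isOpen_univ
  have hUat : ∀ s ∈ Ioo (0 : ℝ) T, ∀ y, ContDiffAt ℝ (⊤ : ℕ∞) (Function.uncurry u) (s, y) :=
    fun s hs y => hu.contDiffAt (hDopen.mem_nhds ⟨hs, mem_univ _⟩)
  have hw : ContDiff ℝ (⊤ : ℕ∞) (u τ) := slice_contDiff hu hτ
  have hVs : ContDiff ℝ (⊤ : ℕ∞) (V τ) := slice_contDiff hV hτ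
  set p : Fin n → EuclideanSpace ℝ (Fin n) → ℝ :=
    fun i y => fderiv ℝ (u τ) y (e n i) with hp_def
  have hp : ∀ i, ContDiff ℝ (⊤ : ℕ∞) (p i) :=
    fun i => (hw.fderiv_right (by simp)).clm_apply contDiff_const
  set q : Fin n → Fin n → EuclideanSpace ℝ (Fin n) → ℝ :=
    fun i j y => fderiv ℝ (p i) y (e n j) with hq_def
  have hq : ∀ i j, ContDiff ℝ (⊤ : ℕ∞) (q i j) :=
    fun i j => ((hp i).fderiv_right (by simp)).clm_apply contDiff_const
  set g : EuclideanSpace ℝ (Fin n) → ℝ := fun y => ∑ i, (p i y) ^ 2 with hg_def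
  have hg : ContDiff ℝ (⊤ : ℕ∞) g := ContDiff.sum fun i _ => (hp i).pow 2
  set L : EuclideanSpace ℝ (Fin n) → ℝ := fun y => ∑ j, q j j y with hL_def
  have hL : ContDiff ℝ (⊤ : ℕ∞) L := ContDiff.sum fun j _ => hq j j
  have hslap : ∀ y, slap n u τ y = L y := fun _ => rfl
  have hnormy : ∀ y, ‖sgrad n u τ y‖ ^ 2 = g y := fun y => grad_norm_sq (u τ) y
  have hGτ : (fun y => ‖sgrad n u τ y‖ ^ 2) = g := funext hnormy
  have hqsymm : ∀ i j, q i j = q j i := fun i j =>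
    funext fun y => fderiv_swap (hw.contDiffAt) (e n i) (e n j)
  have hthird : ∀ i j, fderiv ℝ (q i j) x (e n j) = fderiv ℝ (q j j) x (e n i) := by
    intro i j
    rw [hqsymm i j]
    exact fderiv_swap ((hp j).contDiffAt) (e n i) (e n j)
  set a : Fin n → ℝ := fun i => fderiv ℝ L x (e n i) with ha_def
  set b : Fin n → ℝ := fun i => fderiv ℝ g x (e n i) with hb_def
  set c : Fin n → ℝ := fun i => fderiv ℝ (V τ) x (e n i) with hc_def
  ---- LHS: time derivative
  set Pd : Fin n → ℝ × EuclideanSpace ℝ (Fin n) → ℝ :=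
    fun i z => fderiv ℝ (Function.uncurry u) z (0, e n i) with hPd_def
  have hPdat : ∀ i, ∀ s ∈ Ioo (0 : ℝ) T, ∀ y, ContDiffAt ℝ (⊤ : ℕ∞) (Pd i) (s, y) :=
    fun i s hs y => ((hUat s hs y).fderiv_right (by simp)).clm_apply contDiffAt_const
  have hPdeq : ∀ s ∈ Ioo (0 : ℝ) T, ∀ y i, fderiv ℝ (u s) y (e n i) = Pd i (s, y) :=
    fun s hs y i =>
      joint_spatial_fderiv ((hUat s hs y).differentiableAt (by simp)) (e n i)
  have hev : (fun s => ‖sgrad n u s x‖ ^ 2) =ᶠ[nhds τ] fun s => ∑ i, (Pd i (s, x)) ^ 2 := by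
    filter_upwards [isOpen_Ioo.mem_nhds hτ] with s hs
    exact (grad_norm_sq (u s) x).trans
      (Finset.sum_congr rfl fun i _ => by rw [hPdeq s hs x i])
  have hPdmk : ∀ i, HasDerivAt (fun s => Pd i (s, x))
      (fderiv ℝ (Pd i) (τ, x) (1, 0)) τ :=
    fun i => by
      have h := (((hPdat i τ hτ x).differentiableAt (by simp)).hasFDerivAt).comp_hasDerivAt τ
        ((hasDerivAt_id τ).prodMk (hasDerivAt_const τ x))
      exact h
  have hLHS1 : tderiv n (fun s y => ‖sgrad n u s y‖ ^ 2) τ x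
      = ∑ i, 2 * Pd i (τ, x) * fderiv ℝ (Pd i) (τ, x) (1, 0) := by
    have hsum : HasDerivAt (fun s => ∑ i, (Pd i (s, x)) ^ 2)
        (∑ i, 2 * Pd i (τ, x) * fderiv ℝ (Pd i) (τ, x) (1, 0)) τ := by
      apply HasDerivAt.fun_sum
      intro i _
      have h1 := (hPdmk i).mul (hPdmk i)
      have h2 : (fun s => (Pd i (s, x)) ^ 2) = fun s => Pd i (s, x) * Pd i (s, x) := by
        funext s; ring
      rw [h2, show 2 * Pd i (τ, x) * fderiv ℝ (Pd i) (τ, x) (1, 0)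
        = fderiv ℝ (Pd i) (τ, x) (1, 0) * Pd i (τ, x)
          + Pd i (τ, x) * fderiv ℝ (Pd i) (τ, x) (1, 0) from by ring]
      exact h1
    show deriv (fun s => ‖sgrad n u s x‖ ^ 2) τ = _
    rw [hev.deriv_eq, hsum.deriv]
  ---- time-space commutation
  set R : EuclideanSpace ℝ (Fin n) → ℝ :=
    fun y => fderiv ℝ (Function.uncurry u) (τ, y) ((1 : ℝ), (0 : EuclideanSpace ℝ (Fin n)))
    with hR_def
  have hmix : ∀ i, fderiv ℝ (Pd i) (τ, x) (1, 0) = fderiv ℝ R x (e n i) := by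
    intro i
    have h1 : fderiv ℝ (Pd i) (τ, x) (1, 0)
        = fderiv ℝ (fun z => fderiv ℝ (Function.uncurry u) z
            ((1 : ℝ), (0 : EuclideanSpace ℝ (Fin n)))) (τ, x) (0, e n i) :=
      fderiv_swap (hUat τ hτ x) (0, e n i) (1, 0)
    rw [h1]
    have hΦ : DifferentiableAt ℝ
        (fun z => fderiv ℝ (Function.uncurry u) z
          ((1 : ℝ), (0 : EuclideanSpace ℝ (Fin n)))) (τ, x) :=
      ((((hUat τ hτ x).fderiv_right (m := ((⊤ : ℕ∞) : WithTop ℕ∞)) (by simp)).clm_apply contDiffAt_const).differentiableAt (by simp))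
    exact (joint_spatial_fderiv hΦ (e n i)).symm
  have hR_eq : R = fun y => L y - g y - V τ y - γ * u τ y := by
    funext y
    have h1 : R y = tderiv n u τ y :=
      (joint_time_deriv ((hUat τ hτ y).differentiableAt (by simp))).symm
    rw [h1, hpde τ hτ y, hslap y, hnormy y]
  have hRd : ∀ i, fderiv ℝ R x (e n i) = a i - b i - c i - γ * p i x := by
    intro i
    rw [hR_eq]
    have hLd := (hL.differentiable (by simp) x).hasFDerivAt
    have hgd := (hg.differentiable (by simp) x).hasFDerivAt
    have hVd := (hVs.differentiable (by simp) x).hasFDerivAt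
    have hwd := (hw.differentiable (by simp) x).hasFDerivAt
    have hcomb : HasFDerivAt (fun y => L y - g y - V τ y - γ * u τ y)
        (((fderiv ℝ L x - fderiv ℝ g x) - fderiv ℝ (V τ) x) - γ • fderiv ℝ (u τ) x) x :=
      ((hLd.sub hgd).sub hVd).sub (hwd.const_mul γ)
    rw [hcomb.fderiv]
    simp only [ContinuousLinearMap.sub_apply, ContinuousLinearMap.smul_apply, smul_eq_mul]
    rfl
  have hLHS : tderiv n (fun s y => ‖sgrad n u s y‖ ^ 2) τ x
      = ∑ i, 2 * p i x * (a i - b i - c i - γ * p i x) := by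
    rw [hLHS1]
    refine Finset.sum_congr rfl fun i _ => ?_
    rw [hmix i, hRd i, show Pd i (τ, x) = p i x from (hPdeq τ hτ x i).symm]
  ---- RHS: spatial Laplacian of |∇u|²
  have hgrad_g : ∀ y j, fderiv ℝ g y (e n j) = ∑ i, 2 * p i y * q i j y := by
    intro y j
    rw [hg_def]
    exact fderiv_sum_sq_apply (fun i => (hp i).differentiable (by simp) y) (e n j)
  have hslapG : slap n (fun s y => ‖sgrad n u s y‖ ^ 2) τ x
      = ∑ j, ∑ i, (2 * q i j x * q i j x + 2 * p i x * fderiv ℝ (q j j) x (e n i)) := by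
    simp only [slap, shess, hGτ]
    refine Finset.sum_congr rfl fun j _ => ?_
    have h0 : (fun y => fderiv ℝ g y (e n j)) = fun y => ∑ i, 2 * p i y * q i j y :=
      funext fun y => hgrad_g y j
    rw [h0]
    have h1 := fderiv_sum_mul_apply
      (f := fun i y => 2 * p i y) (g := fun i => q i j) (x := x)
      (fun i => ((hp i).differentiable (by simp) x).const_mul 2)
      (fun i => (hq i j).differentiable (by simp) x) (e n j)
    rw [h1]
    refine Finset.sum_congr rfl fun i _ => ?_
    have h2 : fderiv ℝ (fun y => 2 * p i y) x (e n j) = 2 * q i j x := by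
      rw [fderiv_const_mul ((hp i).differentiable (by simp) x) 2]
      simp [hq_def]
    rw [h2, hthird i j]
  have hLsum : ∀ i, fderiv ℝ L x (e n i) = ∑ j, fderiv ℝ (q j j) x (e n i) := by
    intro i
    rw [hL_def]
    exact fderiv_sum_apply' (fun j => (hq j j).differentiable (by simp) x) (e n i)
  have hhess : hessSq n u τ x = ∑ i, ∑ j, (q j i x) ^ 2 := rfl
  have hinner1 : ⟪sgrad n (fun s y => ‖sgrad n u s y‖ ^ 2) τ x, sgrad n u τ x⟫
      = ∑ i, b i * p i x := by
    show ⟪gradient (fun y => ‖sgrad n u τ y‖ ^ 2) x, gradient (u τ) x⟫ = _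
    rw [hGτ]
    exact grad_inner g (u τ) x
  have hinner2 : ⟪sgrad n V τ x, sgrad n u τ x⟫ = ∑ i, c i * p i x :=
    grad_inner (V τ) (u τ) x
  have hnorm : ‖sgrad n u τ x‖ ^ 2 = ∑ i, (p i x) ^ 2 := grad_norm_sq (u τ) x
  ---- assemble
  rw [hLHS, hslapG, hhess, hinner1, hinner2, hnorm]
  have hsplit : (∑ j, ∑ i, (2 * q i j x * q i j x + 2 * p i x * fderiv ℝ (q j j) x (e n i)))
      = 2 * (∑ i, ∑ j, (q j i x) ^ 2) + ∑ i, 2 * p i x * a i := by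
    rw [show (∑ j, ∑ i, (2 * q i j x * q i j x + 2 * p i x * fderiv ℝ (q j j) x (e n i)))
        = (∑ j, ∑ i, 2 * q i j x * q i j x)
          + (∑ j, ∑ i, 2 * p i x * fderiv ℝ (q j j) x (e n i)) from by
      rw [← Finset.sum_add_distrib]
      exact Finset.sum_congr rfl fun j _ => Finset.sum_add_distrib]
    congr 1
    · rw [Finset.sum_comm, Finset.mul_sum]
      refine Finset.sum_congr rfl fun i _ => ?_
      rw [Finset.mul_sum]
      refine Finset.sum_congr rfl fun j _ => ?_
      rw [hqsymm i j]; ring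
    · rw [Finset.sum_comm]
      refine Finset.sum_congr rfl fun i _ => ?_
      rw [← Finset.mul_sum, ← hLsum i]
  have hexp : ∑ i, 2 * p i x * (a i - b i - c i - γ * p i x)
      = (∑ i, 2 * p i x * a i) - 2 * (∑ i, b i * p i x) - 2 * (∑ i, c i * p i x)
        - 2 * γ * (∑ i, (p i x) ^ 2) := by
    rw [Finset.mul_sum, Finset.mul_sum, Finset.mul_sum, ← Finset.sum_sub_distrib,
      ← Finset.sum_sub_distrib, ← Finset.sum_sub_distrib]
    exact Finset.sum_congr rfl fun i _ => by ring
  rw [hsplit, hexp]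
  ring
end
end

section
/- Let n ≥ 1, T > 0, and let γ, α, β, a, b, c, d be real constants. Let S, u : (0,T) × ℝⁿ → ℝ be smooth with ∂_τ u = Δu − |∇u|² − c·S − γ·u on (0,T) × ℝⁿ. Define H(τ,x) := α·Δu − β·|∇u|² + a·S + b·u/τ + d·n/τ. Then on (0,T) × ℝⁿ: ∂_τ H = ΔH − 2·⟨∇H, ∇u⟩ + 2(a+βc)·⟨∇S, ∇u⟩ − 2(α−β)·‖∇²u‖² + (b/τ)·|∇u|² − (bc/τ)·S − (b/τ²)·u − d·n/τ² + a·∂_τ S − (a+αc)·ΔS − αγ·Δu + 2βγ·|∇u|² − bγ·u/τ. -/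
open Set
open scoped RealInnerProductSpace

noncomputable section

section HQaux
open Function Filter

variable {X : Type*} [NormedAddCommGroup X] [NormedSpace ℝ X]

/-- Directional (partial) derivative operator. -/
def pd (v : X) (f : X → ℝ) : X → ℝ := fun p => fderiv ℝ f p v

variable {Y : Type*} [NormedAddCommGroup Y] [NormedSpace ℝ Y]

theorem cdo_diffAt {f : X → Y} {Ω : Set X} {p : X} (hΩ : IsOpen Ω)
    (hf : ContDiffOn ℝ (⊤ : ℕ∞) f Ω) (hp : p ∈ Ω) : DifferentiableAt ℝ f p :=
  (hf.differentiableOn (by simp)).differentiableAt (hΩ.mem_nhds hp)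

theorem pd_contDiffOn {f : X → ℝ} {Ω : Set X} (hΩ : IsOpen Ω)
    (hf : ContDiffOn ℝ (⊤ : ℕ∞) f Ω) (v : X) : ContDiffOn ℝ (⊤ : ℕ∞) (pd v f) Ω :=
  (hf.fderiv_of_isOpen hΩ (by simp)).clm_apply contDiffOn_const

theorem pd_comm {f : X → ℝ} {Ω : Set X} (hΩ : IsOpen Ω)
    (hf : ContDiffOn ℝ (⊤ : ℕ∞) f Ω) {p : X} (hp : p ∈ Ω) (v w : X) :
    pd v (pd w f) p = pd w (pd v f) p := by
  have hev : ∀ᶠ y in nhds p, HasFDerivAt f (fderiv ℝ f y) y := by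
    filter_upwards [hΩ.mem_nhds hp] with y hy using (cdo_diffAt hΩ hf hy).hasFDerivAt
  have hd : DifferentiableAt ℝ (fderiv ℝ f) p :=
    cdo_diffAt hΩ (hf.fderiv_of_isOpen hΩ (by simp)) hp
  have hsym := second_derivative_symmetric_of_eventually hev hd.hasFDerivAt v w
  have key : ∀ z z' : X, pd z (pd z' f) p = (fderiv ℝ (fderiv ℝ f) p z) z' := by
    intro z z'
    have h1 : HasFDerivAt (fun q => (fderiv ℝ f q) z')
        ((ContinuousLinearMap.apply ℝ ℝ z').comp (fderiv ℝ (fderiv ℝ f) p)) p :=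
      (ContinuousLinearMap.apply ℝ ℝ z').hasFDerivAt.comp p hd.hasFDerivAt
    show (fderiv ℝ (fun q => (fderiv ℝ f q) z') p) z = _
    rw [h1.fderiv]
    rfl
  rw [key v w, key w v, hsym]

section Algebra
variable {f g : X → ℝ} {p v : X} {Ω : Set X}

theorem pd_congr_nhds (h : f =ᶠ[nhds p] g) : pd v f p = pd v g p := by
  simp only [pd]; rw [Filter.EventuallyEq.fderiv_eq h]

theorem pd_congrOn (hΩ : IsOpen Ω) (h : Set.EqOn f g Ω) (hp : p ∈ Ω) :
    pd v f p = pd v g p := by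
  refine pd_congr_nhds ?_
  filter_upwards [hΩ.mem_nhds hp] with q hq using h hq

theorem pd2_congrOn (hΩ : IsOpen Ω) (h : Set.EqOn f g Ω) (hp : p ∈ Ω) (w : X) :
    pd v (pd w f) p = pd v (pd w g) p :=
  pd_congrOn hΩ (fun q hq => pd_congrOn hΩ h hq) hp

theorem pd_add (hf : DifferentiableAt ℝ f p) (hg : DifferentiableAt ℝ g p) :
    pd v (fun q => f q + g q) p = pd v f p + pd v g p := by
  simp [pd, fderiv_fun_add hf hg]

theorem pd_sub (hf : DifferentiableAt ℝ f p) (hg : DifferentiableAt ℝ g p) :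
    pd v (fun q => f q - g q) p = pd v f p - pd v g p := by
  simp [pd, fderiv_fun_sub hf hg]

theorem pd_const_mul (hf : DifferentiableAt ℝ f p) (c : ℝ) :
    pd v (fun q => c * f q) p = c * pd v f p := by
  simp [pd, fderiv_const_mul hf c]

theorem pd_mul (hf : DifferentiableAt ℝ f p) (hg : DifferentiableAt ℝ g p) :
    pd v (fun q => f q * g q) p = f p * pd v g p + g p * pd v f p := by
  simp [pd, fderiv_fun_mul hf hg]

theorem pd_sq (hf : DifferentiableAt ℝ f p) :
    pd v (fun q => (f q) ^ 2) p = 2 * f p * pd v f p := by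
  have h : (fun q => (f q) ^ 2) = fun q => f q * f q := by
    funext q; ring
  rw [h, pd_mul hf hf]; ring

theorem pd_sum {ι : Type*} {s : Finset ι} {A : ι → X → ℝ}
    (h : ∀ i ∈ s, DifferentiableAt ℝ (A i) p) :
    pd v (fun q => ∑ i ∈ s, A i q) p = ∑ i ∈ s, pd v (A i) p := by
  simp [pd, fderiv_fun_sum h]

theorem pd_const (c : ℝ) : pd v (fun _ => c) p = 0 := by simp [pd]

end Algebra

section ProdInv
variable {Z : Type*} [NormedAddCommGroup Z] [NormedSpace ℝ Z]
variable {f : ℝ × Z → ℝ} {p : ℝ × Z}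

theorem hasFDerivAt_inv_fst (h0 : p.1 ≠ 0) :
    HasFDerivAt (fun q : ℝ × Z => (q.1)⁻¹)
      ((-(p.1 ^ 2)⁻¹) • (ContinuousLinearMap.fst ℝ ℝ Z)) p :=
  (hasDerivAt_inv h0).comp_hasFDerivAt p (hasFDerivAt_fst)

theorem pd_inv_fst (h0 : p.1 ≠ 0) (v : ℝ × Z) :
    pd v (fun q : ℝ × Z => (q.1)⁻¹) p = -(p.1 ^ 2)⁻¹ * v.1 := by
  simp [pd, (hasFDerivAt_inv_fst h0).fderiv]

theorem pd_mul_inv_fst {v : ℝ × Z} (hf : DifferentiableAt ℝ f p) (h0 : p.1 ≠ 0) :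
    pd v (fun q => f q * (q.1)⁻¹) p
      = pd v f p * (p.1)⁻¹ + f p * (-(p.1 ^ 2)⁻¹ * v.1) := by
  rw [pd_mul hf (hasFDerivAt_inv_fst h0).differentiableAt, pd_inv_fst h0]
  ring

theorem pd_const_mul_inv_fst {v : ℝ × Z} (c : ℝ) (h0 : p.1 ≠ 0) :
    pd v (fun q : ℝ × Z => c * (q.1)⁻¹) p = c * (-(p.1 ^ 2)⁻¹ * v.1) := by
  rw [pd_const_mul (hasFDerivAt_inv_fst h0).differentiableAt c, pd_inv_fst h0]

end ProdInv
end HQaux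

/-- Spatial coordinate directions in the joint space `ℝ × ℝⁿ`. -/
def dirS (n : ℕ) (i : Fin n) : ℝ × EuclideanSpace ℝ (Fin n) := ((0 : ℝ), e n i)

/-- The time direction in the joint space `ℝ × ℝⁿ`. -/
def dirT (n : ℕ) : ℝ × EuclideanSpace ℝ (Fin n) := ((1 : ℝ), 0)

theorem dirS_fst (n : ℕ) (i : Fin n) : (dirS n i).1 = 0 := rfl
theorem dirT_fst (n : ℕ) : (dirT n).1 = 1 := rfl

section Trans
variable {n : ℕ} {T τ : ℝ}

local notation "E'" => EuclideanSpace ℝ (Fin n)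

theorem isOpen_dom : IsOpen ((Ioo (0:ℝ) T) ×ˢ (univ : Set (EuclideanSpace ℝ (Fin n)))) :=
  isOpen_Ioo.prod isOpen_univ

theorem pd_curry_spatial {g : ℝ × EuclideanSpace ℝ (Fin n) → ℝ}
    (hg : ContDiffOn ℝ (⊤ : ℕ∞) g ((Ioo (0:ℝ) T) ×ˢ (univ : Set (EuclideanSpace ℝ (Fin n)))))
    (hτ : τ ∈ Ioo (0:ℝ) T)
    (x w : EuclideanSpace ℝ (Fin n)) :
    fderiv ℝ (fun y => g (τ, y)) x w = pd ((0 : ℝ), w) g (τ, x) := by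
  have hd : DifferentiableAt ℝ g (τ, x) := cdo_diffAt isOpen_dom hg ⟨hτ, trivial⟩
  have hmk : HasFDerivAt (fun y : E' => ((τ, y) : ℝ × E'))
      ((0 : E' →L[ℝ] ℝ).prod (ContinuousLinearMap.id ℝ E')) x :=
    (hasFDerivAt_const τ x).prodMk (hasFDerivAt_id x)
  have h := (hd.hasFDerivAt.comp x hmk).fderiv
  show (fderiv ℝ (g ∘ fun y => (τ, y)) x) w = _
  rw [h]
  simp [pd]

theorem pd_curry_time {g : ℝ × EuclideanSpace ℝ (Fin n) → ℝ}
    (hg : ContDiffOn ℝ (⊤ : ℕ∞) g ((Ioo (0:ℝ) T) ×ˢ (univ : Set (EuclideanSpace ℝ (Fin n)))))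
    (hτ : τ ∈ Ioo (0:ℝ) T)
    (x : EuclideanSpace ℝ (Fin n)) :
    deriv (fun s => g (s, x)) τ = pd (dirT n) g (τ, x) := by
  have hd : DifferentiableAt ℝ g (τ, x) := cdo_diffAt isOpen_dom hg ⟨hτ, trivial⟩
  have hmk : HasDerivAt (fun s : ℝ => ((s, x) : ℝ × E')) ((1:ℝ), (0:E')) τ :=
    (hasDerivAt_id τ).prodMk (hasDerivAt_const τ x)
  exact (hd.hasFDerivAt.comp_hasDerivAt τ hmk).deriv

variable {f g : ℝ → EuclideanSpace ℝ (Fin n) → ℝ}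

theorem tderiv_pd (hf : ContDiffOn ℝ (⊤ : ℕ∞) (Function.uncurry f) ((Ioo (0:ℝ) T) ×ˢ (univ : Set (EuclideanSpace ℝ (Fin n)))))
    (hτ : τ ∈ Ioo (0:ℝ) T) (x : EuclideanSpace ℝ (Fin n)) :
    tderiv n f τ x = pd (dirT n) (Function.uncurry f) (τ, x) :=
  pd_curry_time hf hτ x

theorem fderiv_curried (hf : ContDiffOn ℝ (⊤ : ℕ∞) (Function.uncurry f) ((Ioo (0:ℝ) T) ×ˢ (univ : Set (EuclideanSpace ℝ (Fin n)))))
    (hτ : τ ∈ Ioo (0:ℝ) T) (x w : EuclideanSpace ℝ (Fin n)) :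
    fderiv ℝ (f τ) x w = pd ((0 : ℝ), w) (Function.uncurry f) (τ, x) :=
  pd_curry_spatial (g := Function.uncurry f) hf hτ x w

theorem shess_pd (hf : ContDiffOn ℝ (⊤ : ℕ∞) (Function.uncurry f) ((Ioo (0:ℝ) T) ×ˢ (univ : Set (EuclideanSpace ℝ (Fin n)))))
    (hτ : τ ∈ Ioo (0:ℝ) T) (x : EuclideanSpace ℝ (Fin n)) (i j : Fin n) :
    shess n f τ x i j
      = pd (dirS n i) (pd (dirS n j) (Function.uncurry f)) (τ, x) := by
  have h1 : (fun y => fderiv ℝ (f τ) y (e n j))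
      = fun y => pd (dirS n j) (Function.uncurry f) (τ, y) :=
    funext fun y => fderiv_curried hf hτ y (e n j)
  show fderiv ℝ (fun y => fderiv ℝ (f τ) y (e n j)) x (e n i) = _
  rw [h1]
  exact pd_curry_spatial (pd_contDiffOn isOpen_dom hf _) hτ x (e n i)

theorem slap_pd (hf : ContDiffOn ℝ (⊤ : ℕ∞) (Function.uncurry f) ((Ioo (0:ℝ) T) ×ˢ (univ : Set (EuclideanSpace ℝ (Fin n)))))
    (hτ : τ ∈ Ioo (0:ℝ) T) (x : EuclideanSpace ℝ (Fin n)) :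
    slap n f τ x
      = ∑ i, pd (dirS n i) (pd (dirS n i) (Function.uncurry f)) (τ, x) :=
  Finset.sum_congr rfl fun i _ => shess_pd hf hτ x i i

theorem sgrad_coord (t : ℝ) (x : EuclideanSpace ℝ (Fin n)) (i : Fin n) :
    sgrad n f t x i = fderiv ℝ (f t) x (e n i) := by
  have h1 : sgrad n f t x i = ⟪sgrad n f t x, e n i⟫ := by
    simp [e, EuclideanSpace.inner_single_right]
  rw [h1, sgrad, gradient]
  exact InnerProductSpace.toDual_symm_apply

theorem inner_sgrad_pd (hf : ContDiffOn ℝ (⊤ : ℕ∞) (Function.uncurry f) ((Ioo (0:ℝ) T) ×ˢ (univ : Set (EuclideanSpace ℝ (Fin n)))))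
    (hg : ContDiffOn ℝ (⊤ : ℕ∞) (Function.uncurry g) ((Ioo (0:ℝ) T) ×ˢ (univ : Set (EuclideanSpace ℝ (Fin n)))))
    (hτ : τ ∈ Ioo (0:ℝ) T) (x : EuclideanSpace ℝ (Fin n)) :
    ⟪sgrad n f τ x, sgrad n g τ x⟫
      = ∑ i, pd (dirS n i) (Function.uncurry f) (τ, x)
          * pd (dirS n i) (Function.uncurry g) (τ, x) := by
  rw [show ⟪sgrad n f τ x, sgrad n g τ x⟫ = ∑ i, sgrad n f τ x i * sgrad n g τ x i by
    simp [PiLp.inner_apply, RCLike.inner_apply, mul_comm]]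
  refine Finset.sum_congr rfl fun i _ => ?_
  rw [sgrad_coord, sgrad_coord, fderiv_curried hf hτ x (e n i),
    fderiv_curried hg hτ x (e n i)]
  rfl

theorem norm_sgrad_pd (hf : ContDiffOn ℝ (⊤ : ℕ∞) (Function.uncurry f) ((Ioo (0:ℝ) T) ×ˢ (univ : Set (EuclideanSpace ℝ (Fin n)))))
    (hτ : τ ∈ Ioo (0:ℝ) T) (x : EuclideanSpace ℝ (Fin n)) :
    ‖sgrad n f τ x‖ ^ 2
      = ∑ i, (pd (dirS n i) (Function.uncurry f) (τ, x)) ^ 2 := by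
  rw [← real_inner_self_eq_norm_sq, inner_sgrad_pd hf hf hτ x]
  exact Finset.sum_congr rfl fun i _ => (pow_two _).symm

theorem hessSq_pd (hf : ContDiffOn ℝ (⊤ : ℕ∞) (Function.uncurry f) ((Ioo (0:ℝ) T) ×ˢ (univ : Set (EuclideanSpace ℝ (Fin n)))))
    (hτ : τ ∈ Ioo (0:ℝ) T) (x : EuclideanSpace ℝ (Fin n)) :
    hessSq n f τ x
      = ∑ i, ∑ j, (pd (dirS n i) (pd (dirS n j) (Function.uncurry f)) (τ, x)) ^ 2 :=
  Finset.sum_congr rfl fun i _ => Finset.sum_congr rfl fun j _ => by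
    rw [shess_pd hf hτ x i j]

end Trans

/-- Proposition 3.2 (evolution of the Harnack quantity `H`), static flat case. -/
theorem evolution_harnack_quantity (n : ℕ) (hn : 1 ≤ n)
    (T γ α β a b c d : ℝ) (hT : 0 < T)
    (S u : ℝ → EuclideanSpace ℝ (Fin n) → ℝ)
    (hS : ContDiffOn ℝ (⊤ : ℕ∞) (Function.uncurry S)
      (Ioo (0 : ℝ) T ×ˢ (univ : Set (EuclideanSpace ℝ (Fin n)))))
    (hu : ContDiffOn ℝ (⊤ : ℕ∞) (Function.uncurry u)
      (Ioo (0 : ℝ) T ×ˢ (univ : Set (EuclideanSpace ℝ (Fin n)))))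
    (hpde : ∀ τ ∈ Ioo (0 : ℝ) T, ∀ x,
      tderiv n u τ x = slap n u τ x - ‖sgrad n u τ x‖ ^ 2 - c * S τ x - γ * u τ x)
    (H : ℝ → EuclideanSpace ℝ (Fin n) → ℝ)
    (hH : H = fun τ x => α * slap n u τ x - β * ‖sgrad n u τ x‖ ^ 2
      + a * S τ x + b * u τ x / τ + d * n / τ) :
    ∀ τ ∈ Ioo (0 : ℝ) T, ∀ x,
      tderiv n H τ x
        = slap n H τ x - 2 * ⟪sgrad n H τ x, sgrad n u τ x⟫
          + 2 * (a + β * c) * ⟪sgrad n S τ x, sgrad n u τ x⟫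
          - 2 * (α - β) * hessSq n u τ x
          + (b / τ) * ‖sgrad n u τ x‖ ^ 2
          - (b * c / τ) * S τ x
          - (b / τ ^ 2) * u τ x
          - d * n / τ ^ 2
          + a * tderiv n S τ x
          - (a + α * c) * slap n S τ x
          - α * γ * slap n u τ x
          + 2 * β * γ * ‖sgrad n u τ x‖ ^ 2
          - b * γ * u τ x / τ := by
  intro τ hτ x
  have hτ0 : τ ≠ 0 := ne_of_gt hτ.1
  have hΩ : IsOpen ((Ioo (0:ℝ) T) ×ˢ (univ : Set (EuclideanSpace ℝ (Fin n)))) := isOpen_dom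
  have hp : (((τ, x) : ℝ × EuclideanSpace ℝ (Fin n))) ∈ ((Ioo (0:ℝ) T) ×ˢ (univ : Set (EuclideanSpace ℝ (Fin n)))) := ⟨hτ, trivial⟩
  have hτ0' : ((((τ, x) : ℝ × EuclideanSpace ℝ (Fin n))).1) ≠ 0 := hτ0
  have dU : ∀ {q : ℝ × EuclideanSpace ℝ (Fin n)}, q ∈ ((Ioo (0:ℝ) T) ×ˢ (univ : Set (EuclideanSpace ℝ (Fin n)))) → DifferentiableAt ℝ (Function.uncurry u) q := fun {q} hq => cdo_diffAt hΩ hu hq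
  have dSm : ∀ {q : ℝ × EuclideanSpace ℝ (Fin n)}, q ∈ ((Ioo (0:ℝ) T) ×ˢ (univ : Set (EuclideanSpace ℝ (Fin n)))) → DifferentiableAt ℝ (Function.uncurry S) q := fun {q} hq => cdo_diffAt hΩ hS hq
  have cd1 : ∀ v, ContDiffOn ℝ (⊤ : ℕ∞) (pd v (Function.uncurry u)) ((Ioo (0:ℝ) T) ×ˢ (univ : Set (EuclideanSpace ℝ (Fin n)))) := fun v => pd_contDiffOn hΩ hu v
  have cd2 : ∀ v w, ContDiffOn ℝ (⊤ : ℕ∞) (pd v (pd w (Function.uncurry u))) ((Ioo (0:ℝ) T) ×ˢ (univ : Set (EuclideanSpace ℝ (Fin n)))) := fun v w => pd_contDiffOn hΩ (cd1 w) v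
  have cd3 : ∀ v w z, ContDiffOn ℝ (⊤ : ℕ∞) (pd v (pd w (pd z (Function.uncurry u)))) ((Ioo (0:ℝ) T) ×ˢ (univ : Set (EuclideanSpace ℝ (Fin n)))) := fun v w z => pd_contDiffOn hΩ (cd2 w z) v
  have cdS1 : ∀ v, ContDiffOn ℝ (⊤ : ℕ∞) (pd v (Function.uncurry S)) ((Ioo (0:ℝ) T) ×ˢ (univ : Set (EuclideanSpace ℝ (Fin n)))) := fun v => pd_contDiffOn hΩ hS v
  have d1 : ∀ v {q}, q ∈ ((Ioo (0:ℝ) T) ×ˢ (univ : Set (EuclideanSpace ℝ (Fin n)))) → DifferentiableAt ℝ (pd v (Function.uncurry u)) q := fun v {q} hq => cdo_diffAt hΩ (cd1 v) hq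
  have d2 : ∀ v w {q}, q ∈ ((Ioo (0:ℝ) T) ×ˢ (univ : Set (EuclideanSpace ℝ (Fin n)))) → DifferentiableAt ℝ (pd v (pd w (Function.uncurry u))) q := fun v w {q} hq => cdo_diffAt hΩ (cd2 v w) hq
  have d3 : ∀ v w z {q}, q ∈ ((Ioo (0:ℝ) T) ×ˢ (univ : Set (EuclideanSpace ℝ (Fin n)))) → DifferentiableAt ℝ (pd v (pd w (pd z (Function.uncurry u)))) q := fun v w z {q} hq => cdo_diffAt hΩ (cd3 v w z) hq
  have dS1 : ∀ v {q}, q ∈ ((Ioo (0:ℝ) T) ×ˢ (univ : Set (EuclideanSpace ℝ (Fin n)))) → DifferentiableAt ℝ (pd v (Function.uncurry S)) q := fun v {q} hq => cdo_diffAt hΩ (cdS1 v) hq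
  have dInv : ∀ {q : ℝ × EuclideanSpace ℝ (Fin n)}, q ∈ ((Ioo (0:ℝ) T) ×ˢ (univ : Set (EuclideanSpace ℝ (Fin n)))) → DifferentiableAt ℝ (fun r : ℝ × EuclideanSpace ℝ (Fin n) => (r.1)⁻¹) q := fun {q} hq => (hasFDerivAt_inv_fst (ne_of_gt hq.1.1)).differentiableAt
  have cdA : ContDiffOn ℝ (⊤ : ℕ∞) (fun q => ∑ i, pd (dirS n i) (pd (dirS n i) (Function.uncurry u)) q) ((Ioo (0:ℝ) T) ×ˢ (univ : Set (EuclideanSpace ℝ (Fin n)))) := ContDiffOn.sum fun i _ => cd2 _ _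
  have cdB : ContDiffOn ℝ (⊤ : ℕ∞) (fun q => ∑ i, (pd (dirS n i) (Function.uncurry u) q) ^ 2) ((Ioo (0:ℝ) T) ×ˢ (univ : Set (EuclideanSpace ℝ (Fin n)))) := ContDiffOn.sum fun i _ => (cd1 _).pow 2
  have dA : ∀ {q}, q ∈ ((Ioo (0:ℝ) T) ×ˢ (univ : Set (EuclideanSpace ℝ (Fin n)))) → DifferentiableAt ℝ (fun q => ∑ i, pd (dirS n i) (pd (dirS n i) (Function.uncurry u)) q) q := fun {q} hq => cdo_diffAt hΩ cdA hq
  have dB : ∀ {q}, q ∈ ((Ioo (0:ℝ) T) ×ˢ (univ : Set (EuclideanSpace ℝ (Fin n)))) → DifferentiableAt ℝ (fun q => ∑ i, (pd (dirS n i) (Function.uncurry u) q) ^ 2) q := fun {q} hq => cdo_diffAt hΩ cdB hq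
  have dA3 : ∀ (i : Fin n) {q}, q ∈ ((Ioo (0:ℝ) T) ×ˢ (univ : Set (EuclideanSpace ℝ (Fin n)))) → DifferentiableAt ℝ (fun r => ∑ j, pd (dirS n i) (pd (dirS n j) (pd (dirS n j) (Function.uncurry u))) r) q := fun i {q} hq => DifferentiableAt.fun_sum fun j _ => d3 _ _ _ hq
  have dB2 : ∀ (i : Fin n) {q}, q ∈ ((Ioo (0:ℝ) T) ×ˢ (univ : Set (EuclideanSpace ℝ (Fin n)))) → DifferentiableAt ℝ (fun r => ∑ j, pd (dirS n j) (Function.uncurry u) r * pd (dirS n i) (pd (dirS n j) (Function.uncurry u)) r) q := fun i {q} hq => DifferentiableAt.fun_sum fun j _ => (d1 _ hq).mul (d2 _ _ hq)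
  set P : ℝ × EuclideanSpace ℝ (Fin n) → ℝ := fun q => (∑ i, pd (dirS n i) (pd (dirS n i) (Function.uncurry u)) q) - (∑ i, (pd (dirS n i) (Function.uncurry u) q) ^ 2) - c * (Function.uncurry S) q - γ * (Function.uncurry u) q with hPd
  set G : ℝ × EuclideanSpace ℝ (Fin n) → ℝ := fun q => α * (∑ i, pd (dirS n i) (pd (dirS n i) (Function.uncurry u)) q) - β * (∑ i, (pd (dirS n i) (Function.uncurry u) q) ^ 2) + a * (Function.uncurry S) q + b * (Function.uncurry u) q * (q.1)⁻¹ + d * (n:ℝ) * (q.1)⁻¹ with hGd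
  set Q : Fin n → ℝ × EuclideanSpace ℝ (Fin n) → ℝ := fun i q => (∑ j, pd (dirS n i) (pd (dirS n j) (pd (dirS n j) (Function.uncurry u))) q) - 2 * (∑ j, pd (dirS n j) (Function.uncurry u) q * pd (dirS n i) (pd (dirS n j) (Function.uncurry u)) q) - c * pd (dirS n i) (Function.uncurry S) q - γ * pd (dirS n i) (Function.uncurry u) q with hQd
  set R : Fin n → ℝ × EuclideanSpace ℝ (Fin n) → ℝ := fun i q => α * (∑ j, pd (dirS n i) (pd (dirS n j) (pd (dirS n j) (Function.uncurry u))) q) - β * (2 * (∑ j, pd (dirS n j) (Function.uncurry u) q * pd (dirS n i) (pd (dirS n j) (Function.uncurry u)) q)) + a * pd (dirS n i) (Function.uncurry S) q + b * pd (dirS n i) (Function.uncurry u) q * (q.1)⁻¹ with hRd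
  have EB : ∀ (v : ℝ × EuclideanSpace ℝ (Fin n)) {q}, q ∈ ((Ioo (0:ℝ) T) ×ˢ (univ : Set (EuclideanSpace ℝ (Fin n)))) → pd v (fun r => ∑ j, (pd (dirS n j) (Function.uncurry u) r) ^ 2) q = 2 * (∑ j, pd (dirS n j) (Function.uncurry u) q * pd v (pd (dirS n j) (Function.uncurry u)) q) := by
    intro v q hq
    rw [pd_sum (fun j _ => (d1 _ hq).fun_pow 2)]
    have h2 : ∀ j : Fin n, pd v (fun r => (pd (dirS n j) (Function.uncurry u) r) ^ 2) q = 2 * (pd (dirS n j) (Function.uncurry u) q * pd v (pd (dirS n j) (Function.uncurry u)) q) := fun j => by rw [pd_sq (d1 _ hq)]; ring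
    rw [Finset.sum_congr rfl fun j _ => h2 j, ← Finset.mul_sum]
  have EA : ∀ (v : ℝ × EuclideanSpace ℝ (Fin n)) {q}, q ∈ ((Ioo (0:ℝ) T) ×ˢ (univ : Set (EuclideanSpace ℝ (Fin n)))) → pd v (fun r => ∑ i, pd (dirS n i) (pd (dirS n i) (Function.uncurry u)) r) q = ∑ i, pd v (pd (dirS n i) (pd (dirS n i) (Function.uncurry u))) q := fun v q hq => pd_sum (fun i _ => d2 _ _ hq)
  have hPDE : Set.EqOn (pd (dirT n) (Function.uncurry u)) P ((Ioo (0:ℝ) T) ×ˢ (univ : Set (EuclideanSpace ℝ (Fin n)))) := by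
    rintro ⟨s, y⟩ ⟨hs, -⟩
    have h1 := hpde s hs y
    rw [tderiv_pd hu hs y, slap_pd hu hs y, norm_sgrad_pd hu hs y] at h1
    simp only [hPd]
    simpa [Function.uncurry_apply_pair] using h1
  have cdInv : ContDiffOn ℝ (⊤ : ℕ∞) (fun q : ℝ × EuclideanSpace ℝ (Fin n) => (q.1)⁻¹) ((Ioo (0:ℝ) T) ×ˢ (univ : Set (EuclideanSpace ℝ (Fin n)))) := ContDiffOn.inv (contDiff_fst.contDiffOn) (fun q hq => ne_of_gt hq.1.1)
  have cdG : ContDiffOn ℝ (⊤ : ℕ∞) G ((Ioo (0:ℝ) T) ×ˢ (univ : Set (EuclideanSpace ℝ (Fin n)))) := by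
    rw [hGd]
    exact ((((contDiffOn_const.mul cdA).sub (contDiffOn_const.mul cdB)).add (contDiffOn_const.mul hS)).add ((contDiffOn_const.mul hu).mul cdInv)).add (contDiffOn_const.mul cdInv)
  have hdP : ∀ i : Fin n, Set.EqOn (pd (dirS n i) P) (Q i) ((Ioo (0:ℝ) T) ×ˢ (univ : Set (EuclideanSpace ℝ (Fin n)))) := by
    intro i q hq
    simp only [hPd, hQd]
    rw [pd_sub (((dA hq).fun_sub (dB hq)).fun_sub ((dSm hq).const_mul c)) ((dU hq).const_mul γ),
        pd_sub ((dA hq).fun_sub (dB hq)) ((dSm hq).const_mul c),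
        pd_sub (dA hq) (dB hq),
        pd_const_mul (dSm hq) c, pd_const_mul (dU hq) γ,
        EA _ hq, EB _ hq]
  have hpdG : ∀ i : Fin n, Set.EqOn (pd (dirS n i) G) (R i) ((Ioo (0:ℝ) T) ×ˢ (univ : Set (EuclideanSpace ℝ (Fin n)))) := by
    intro i q hq
    simp only [hGd, hRd]
    rw [pd_add (((((dA hq).const_mul α).fun_sub ((dB hq).const_mul β)).fun_add ((dSm hq).const_mul a)).fun_add (((dU hq).const_mul b).fun_mul (dInv hq))) ((dInv hq).const_mul (d * (n:ℝ))),
        pd_add ((((dA hq).const_mul α).fun_sub ((dB hq).const_mul β)).fun_add ((dSm hq).const_mul a)) (((dU hq).const_mul b).fun_mul (dInv hq)),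
        pd_add (((dA hq).const_mul α).fun_sub ((dB hq).const_mul β)) ((dSm hq).const_mul a),
        pd_sub ((dA hq).const_mul α) ((dB hq).const_mul β),
        pd_const_mul (dA hq) α, pd_const_mul (dB hq) β, pd_const_mul (dSm hq) a,
        pd_mul_inv_fst ((dU hq).const_mul b) (ne_of_gt hq.1.1),
        pd_const_mul_inv_fst (d * (n:ℝ)) (ne_of_gt hq.1.1),
        pd_const_mul (dU hq) b,
        EA _ hq, EB _ hq]
    simp only [dirS_fst, mul_zero, add_zero]
  have hHG : Set.EqOn (Function.uncurry H) G ((Ioo (0:ℝ) T) ×ˢ (univ : Set (EuclideanSpace ℝ (Fin n)))) := by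
    rintro ⟨s, y⟩ ⟨hs, -⟩
    show H s y = G (s, y)
    simp only [hH]
    rw [slap_pd hu hs y, norm_sgrad_pd hu hs y]
    simp only [hGd, Function.uncurry_apply_pair]
    ring
  have cdH : ContDiffOn ℝ (⊤ : ℕ∞) (Function.uncurry H) ((Ioo (0:ℝ) T) ×ˢ (univ : Set (EuclideanSpace ℝ (Fin n)))) := cdG.congr hHG
  -- symmetry of derivatives
  have symP : ∀ i : Fin n, pd (dirT n) (pd (dirS n i) (Function.uncurry u)) ((τ, x) : ℝ × EuclideanSpace ℝ (Fin n)) = pd (dirS n i) P ((τ, x) : ℝ × EuclideanSpace ℝ (Fin n)) := fun i => (pd_comm hΩ hu hp (dirT n) (dirS n i)).trans (pd_congrOn hΩ hPDE hp)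
  have symPP : ∀ i : Fin n, pd (dirT n) (pd (dirS n i) (pd (dirS n i) (Function.uncurry u))) ((τ, x) : ℝ × EuclideanSpace ℝ (Fin n)) = pd (dirS n i) (pd (dirS n i) P) ((τ, x) : ℝ × EuclideanSpace ℝ (Fin n)) := by
    intro i
    have h1 : pd (dirT n) (pd (dirS n i) (pd (dirS n i) (Function.uncurry u))) ((τ, x) : ℝ × EuclideanSpace ℝ (Fin n)) = pd (dirS n i) (pd (dirT n) (pd (dirS n i) (Function.uncurry u))) ((τ, x) : ℝ × EuclideanSpace ℝ (Fin n)) := pd_comm hΩ (cd1 (dirS n i)) hp (dirT n) (dirS n i)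
    have h2 : Set.EqOn (pd (dirT n) (pd (dirS n i) (Function.uncurry u))) (pd (dirS n i) (pd (dirT n) (Function.uncurry u))) ((Ioo (0:ℝ) T) ×ˢ (univ : Set (EuclideanSpace ℝ (Fin n)))) := fun q hq => pd_comm hΩ hu hq (dirT n) (dirS n i)
    have h3 : Set.EqOn (pd (dirS n i) (pd (dirT n) (Function.uncurry u))) (pd (dirS n i) P) ((Ioo (0:ℝ) T) ×ˢ (univ : Set (EuclideanSpace ℝ (Fin n)))) := fun q hq => pd_congrOn hΩ hPDE hq
    exact h1.trans (pd_congrOn hΩ (h2.trans h3) hp)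
  have sym3 : ∀ i j : Fin n, pd (dirS n j) (pd (dirS n j) (pd (dirS n i) (Function.uncurry u))) ((τ, x) : ℝ × EuclideanSpace ℝ (Fin n)) = pd (dirS n i) (pd (dirS n j) (pd (dirS n j) (Function.uncurry u))) ((τ, x) : ℝ × EuclideanSpace ℝ (Fin n)) := by
    intro i j
    have h2 : Set.EqOn (pd (dirS n j) (pd (dirS n i) (Function.uncurry u))) (pd (dirS n i) (pd (dirS n j) (Function.uncurry u))) ((Ioo (0:ℝ) T) ×ˢ (univ : Set (EuclideanSpace ℝ (Fin n)))) := fun q hq => pd_comm hΩ hu hq (dirS n j) (dirS n i)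
    have h1 : pd (dirS n j) (pd (dirS n j) (pd (dirS n i) (Function.uncurry u))) ((τ, x) : ℝ × EuclideanSpace ℝ (Fin n)) = pd (dirS n j) (pd (dirS n i) (pd (dirS n j) (Function.uncurry u))) ((τ, x) : ℝ × EuclideanSpace ℝ (Fin n)) := pd_congrOn hΩ h2 hp
    have h3 : pd (dirS n j) (pd (dirS n i) (pd (dirS n j) (Function.uncurry u))) ((τ, x) : ℝ × EuclideanSpace ℝ (Fin n)) = pd (dirS n i) (pd (dirS n j) (pd (dirS n j) (Function.uncurry u))) ((τ, x) : ℝ × EuclideanSpace ℝ (Fin n)) := pd_comm hΩ (cd1 (dirS n j)) hp (dirS n j) (dirS n i)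
    exact h1.trans h3
  -- expansion of the i-th derivative of Q i at the point
  have EQ : ∀ i : Fin n, pd (dirS n i) (Q i) ((τ, x) : ℝ × EuclideanSpace ℝ (Fin n)) = (∑ j, pd (dirS n i) (pd (dirS n i) (pd (dirS n j) (pd (dirS n j) (Function.uncurry u)))) ((τ, x) : ℝ × EuclideanSpace ℝ (Fin n))) - 2 * ((∑ j, pd (dirS n j) (Function.uncurry u) ((τ, x) : ℝ × EuclideanSpace ℝ (Fin n)) * pd (dirS n i) (pd (dirS n i) (pd (dirS n j) (Function.uncurry u))) ((τ, x) : ℝ × EuclideanSpace ℝ (Fin n))) + (∑ j, (pd (dirS n i) (pd (dirS n j) (Function.uncurry u)) ((τ, x) : ℝ × EuclideanSpace ℝ (Fin n))) ^ 2)) - c * pd (dirS n i) (pd (dirS n i) (Function.uncurry S)) ((τ, x) : ℝ × EuclideanSpace ℝ (Fin n)) - γ * pd (dirS n i) (pd (dirS n i) (Function.uncurry u)) ((τ, x) : ℝ × EuclideanSpace ℝ (Fin n)) := by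
    intro i
    simp only [hQd]
    rw [pd_sub (((dA3 i hp).fun_sub ((dB2 i hp).const_mul 2)).fun_sub ((dS1 _ hp).const_mul c)) ((d1 _ hp).const_mul γ),
        pd_sub ((dA3 i hp).fun_sub ((dB2 i hp).const_mul 2)) ((dS1 _ hp).const_mul c),
        pd_sub (dA3 i hp) ((dB2 i hp).const_mul 2),
        pd_const_mul (dB2 i hp) 2, pd_const_mul (dS1 _ hp) c, pd_const_mul (d1 _ hp) γ,
        pd_sum (fun j _ => d3 _ _ _ hp), pd_sum (fun j _ => (d1 _ hp).fun_mul (d2 _ _ hp))]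
    have hj : ∀ j : Fin n, pd (dirS n i) (fun r => pd (dirS n j) (Function.uncurry u) r * pd (dirS n i) (pd (dirS n j) (Function.uncurry u)) r) ((τ, x) : ℝ × EuclideanSpace ℝ (Fin n)) = pd (dirS n j) (Function.uncurry u) ((τ, x) : ℝ × EuclideanSpace ℝ (Fin n)) * pd (dirS n i) (pd (dirS n i) (pd (dirS n j) (Function.uncurry u))) ((τ, x) : ℝ × EuclideanSpace ℝ (Fin n)) + (pd (dirS n i) (pd (dirS n j) (Function.uncurry u)) ((τ, x) : ℝ × EuclideanSpace ℝ (Fin n))) ^ 2 := by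
      intro j
      rw [pd_mul (d1 _ hp) (d2 _ _ hp)]
      ring
    rw [Finset.sum_congr rfl fun j _ => hj j, Finset.sum_add_distrib]
  have ER : ∀ i : Fin n, pd (dirS n i) (R i) ((τ, x) : ℝ × EuclideanSpace ℝ (Fin n)) = α * (∑ j, pd (dirS n i) (pd (dirS n i) (pd (dirS n j) (pd (dirS n j) (Function.uncurry u)))) ((τ, x) : ℝ × EuclideanSpace ℝ (Fin n))) - β * (2 * ((∑ j, pd (dirS n j) (Function.uncurry u) ((τ, x) : ℝ × EuclideanSpace ℝ (Fin n)) * pd (dirS n i) (pd (dirS n i) (pd (dirS n j) (Function.uncurry u))) ((τ, x) : ℝ × EuclideanSpace ℝ (Fin n))) + (∑ j, (pd (dirS n i) (pd (dirS n j) (Function.uncurry u)) ((τ, x) : ℝ × EuclideanSpace ℝ (Fin n))) ^ 2))) + a * pd (dirS n i) (pd (dirS n i) (Function.uncurry S)) ((τ, x) : ℝ × EuclideanSpace ℝ (Fin n)) + b * τ⁻¹ * pd (dirS n i) (pd (dirS n i) (Function.uncurry u)) ((τ, x) : ℝ × EuclideanSpace ℝ (Fin n)) := by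
    intro i
    simp only [hRd]
    rw [pd_add ((((dA3 i hp).const_mul α).fun_sub (((dB2 i hp).const_mul 2).const_mul β)).fun_add ((dS1 _ hp).const_mul a)) (((d1 _ hp).const_mul b).fun_mul (dInv hp)),
        pd_add (((dA3 i hp).const_mul α).fun_sub (((dB2 i hp).const_mul 2).const_mul β)) ((dS1 _ hp).const_mul a),
        pd_sub ((dA3 i hp).const_mul α) (((dB2 i hp).const_mul 2).const_mul β),
        pd_const_mul (dA3 i hp) α, pd_const_mul ((dB2 i hp).const_mul 2) β, pd_const_mul (dB2 i hp) 2,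
        pd_const_mul (dS1 _ hp) a,
        pd_mul_inv_fst ((d1 _ hp).const_mul b) hτ0',
        pd_const_mul (d1 _ hp) b,
        pd_sum (fun j _ => d3 _ _ _ hp), pd_sum (fun j _ => (d1 _ hp).fun_mul (d2 _ _ hp))]
    have hj : ∀ j : Fin n, pd (dirS n i) (fun r => pd (dirS n j) (Function.uncurry u) r * pd (dirS n i) (pd (dirS n j) (Function.uncurry u)) r) ((τ, x) : ℝ × EuclideanSpace ℝ (Fin n)) = pd (dirS n j) (Function.uncurry u) ((τ, x) : ℝ × EuclideanSpace ℝ (Fin n)) * pd (dirS n i) (pd (dirS n i) (pd (dirS n j) (Function.uncurry u))) ((τ, x) : ℝ × EuclideanSpace ℝ (Fin n)) + (pd (dirS n i) (pd (dirS n j) (Function.uncurry u)) ((τ, x) : ℝ × EuclideanSpace ℝ (Fin n))) ^ 2 := by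
      intro j
      rw [pd_mul (d1 _ hp) (d2 _ _ hp)]
      ring
    rw [Finset.sum_congr rfl fun j _ => hj j, Finset.sum_add_distrib]
    simp only [dirS_fst, mul_zero, add_zero]
    ring
  have Qval : ∀ i : Fin n, Q i ((τ, x) : ℝ × EuclideanSpace ℝ (Fin n)) = (∑ j, pd (dirS n i) (pd (dirS n j) (pd (dirS n j) (Function.uncurry u))) ((τ, x) : ℝ × EuclideanSpace ℝ (Fin n))) - 2 * (∑ j, pd (dirS n j) (Function.uncurry u) ((τ, x) : ℝ × EuclideanSpace ℝ (Fin n)) * pd (dirS n i) (pd (dirS n j) (Function.uncurry u)) ((τ, x) : ℝ × EuclideanSpace ℝ (Fin n))) - c * pd (dirS n i) (Function.uncurry S) ((τ, x) : ℝ × EuclideanSpace ℝ (Fin n)) - γ * pd (dirS n i) (Function.uncurry u) ((τ, x) : ℝ × EuclideanSpace ℝ (Fin n)) := fun i => by simp only [hQd]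
  have Rval : ∀ i : Fin n, R i ((τ, x) : ℝ × EuclideanSpace ℝ (Fin n)) = α * (∑ j, pd (dirS n i) (pd (dirS n j) (pd (dirS n j) (Function.uncurry u))) ((τ, x) : ℝ × EuclideanSpace ℝ (Fin n))) - β * (2 * (∑ j, pd (dirS n j) (Function.uncurry u) ((τ, x) : ℝ × EuclideanSpace ℝ (Fin n)) * pd (dirS n i) (pd (dirS n j) (Function.uncurry u)) ((τ, x) : ℝ × EuclideanSpace ℝ (Fin n)))) + a * pd (dirS n i) (Function.uncurry S) ((τ, x) : ℝ × EuclideanSpace ℝ (Fin n)) + b * τ⁻¹ * pd (dirS n i) (Function.uncurry u) ((τ, x) : ℝ × EuclideanSpace ℝ (Fin n)) := by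
    intro i
    simp only [hRd]
    ring
  have Pval : P ((τ, x) : ℝ × EuclideanSpace ℝ (Fin n)) = (∑ i, pd (dirS n i) (pd (dirS n i) (Function.uncurry u)) ((τ, x) : ℝ × EuclideanSpace ℝ (Fin n))) - (∑ i, (pd (dirS n i) (Function.uncurry u) ((τ, x) : ℝ × EuclideanSpace ℝ (Fin n))) ^ 2) - c * S τ x - γ * u τ x := by
    simp only [hPd, Function.uncurry_apply_pair]
  -- key per-index reductions
  have hαi : ∀ i : Fin n, pd (dirS n i) (pd (dirS n i) P) ((τ, x) : ℝ × EuclideanSpace ℝ (Fin n)) = (∑ j, pd (dirS n i) (pd (dirS n i) (pd (dirS n j) (pd (dirS n j) (Function.uncurry u)))) ((τ, x) : ℝ × EuclideanSpace ℝ (Fin n))) - 2 * ((∑ j, pd (dirS n j) (Function.uncurry u) ((τ, x) : ℝ × EuclideanSpace ℝ (Fin n)) * pd (dirS n i) (pd (dirS n i) (pd (dirS n j) (Function.uncurry u))) ((τ, x) : ℝ × EuclideanSpace ℝ (Fin n))) + (∑ j, (pd (dirS n i) (pd (dirS n j) (Function.uncurry u)) ((τ, x) : ℝ × EuclideanSpace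 ℝ (Fin n))) ^ 2)) - c * pd (dirS n i) (pd (dirS n i) (Function.uncurry S)) ((τ, x) : ℝ × EuclideanSpace ℝ (Fin n)) - γ * pd (dirS n i) (pd (dirS n i) (Function.uncurry u)) ((τ, x) : ℝ × EuclideanSpace ℝ (Fin n)) := fun i => (pd_congrOn hΩ (hdP i) hp).trans (EQ i)
  have hβi : ∀ i : Fin n, pd (dirS n i) (Function.uncurry u) ((τ, x) : ℝ × EuclideanSpace ℝ (Fin n)) * pd (dirT n) (pd (dirS n i) (Function.uncurry u)) ((τ, x) : ℝ × EuclideanSpace ℝ (Fin n)) = pd (dirS n i) (Function.uncurry u) ((τ, x) : ℝ × EuclideanSpace ℝ (Fin n)) * (∑ j, pd (dirS n i) (pd (dirS n j) (pd (dirS n j) (Function.uncurry u))) ((τ, x) : ℝ × EuclideanSpace ℝ (Fin n))) - 2 * (pd (dirS n i) (Function.uncurry u) ((τ, x) : ℝ × EuclideanSpace ℝ (Fin n)) * (∑ j, pd (dirS n j) (Function.uncurry u) ((τ, x) : ℝ × EuclideanSpace ℝ (Fin n)) * pd (dirS n i) (pd (dirS n j) (Function.uncurry u)) ((τ, x) :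 ℝ × EuclideanSpace ℝ (Fin n)))) - c * (pd (dirS n i) (Function.uncurry S) ((τ, x) : ℝ × EuclideanSpace ℝ (Fin n)) * pd (dirS n i) (Function.uncurry u) ((τ, x) : ℝ × EuclideanSpace ℝ (Fin n))) - γ * (pd (dirS n i) (Function.uncurry u) ((τ, x) : ℝ × EuclideanSpace ℝ (Fin n))) ^ 2 := by
    intro i
    rw [symP i, hdP i hp, Qval i]
    ring
  -- the three big rewrites
  have eL : pd (dirT n) G ((τ, x) : ℝ × EuclideanSpace ℝ (Fin n)) = α * ((∑ i, ∑ j, pd (dirS n i) (pd (dirS n i) (pd (dirS n j) (pd (dirS n j) (Function.uncurry u)))) ((τ, x) : ℝ × EuclideanSpace ℝ (Fin n))) - 2 * ((∑ i, ∑ j, pd (dirS n j) (Function.uncurry u) ((τ, x) : ℝ × EuclideanSpace ℝ (Fin n)) * pd (dirS n i) (pd (dirS n i) (pd (dirS n j) (Function.uncurry u))) ((τ, x) : ℝ × EuclideanSpace ℝ (Fin n))) + (∑ i, ∑ j, (pd (dirS n i) (pd (dirS n j) (Function.uncurry u)) ((τ, x) : ℝ × EuclideanSpace ℝ (Fin n)))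 ^ 2)) - c * (∑ i, pd (dirS n i) (pd (dirS n i) (Function.uncurry S)) ((τ, x) : ℝ × EuclideanSpace ℝ (Fin n))) - γ * (∑ i, pd (dirS n i) (pd (dirS n i) (Function.uncurry u)) ((τ, x) : ℝ × EuclideanSpace ℝ (Fin n)))) - β * (2 * ((∑ i, pd (dirS n i) (Function.uncurry u) ((τ, x) : ℝ × EuclideanSpace ℝ (Fin n)) * (∑ j, pd (dirS n i) (pd (dirS n j) (pd (dirS n j) (Function.uncurry u))) ((τ, x) : ℝ × EuclideanSpace ℝ (Fin n)))) - 2 * ((∑ i, pd (dirS n i) (Function.uncurry u) ((τ, x) : ℝ × EuclideanSpace ℝ (Fin n)) * (∑ j, pd (dirS n j) (Function.uncurry u) ((τ, x) : ℝ × EuclideanSpace ℝ (Fin n)) * pd (dirS n i) (pd (dirS n j) (Function.uncurry u)) ((τ, x) : ℝ × EuclideanSpace ℝ (Fin n))))) - c * (∑ i, pd (dirS n i) (Function.uncurry S) ((τ, x) : ℝ × EuclideanSpace ℝ (Fin n)) * pd (dirS n i) (Function.uncurry u) ((τ, x) : ℝ × EuclideanSpace ℝ (Fin n))) - γ * (∑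 i, (pd (dirS n i) (Function.uncurry u) ((τ, x) : ℝ × EuclideanSpace ℝ (Fin n))) ^ 2))) + a * pd (dirT n) (Function.uncurry S) ((τ, x) : ℝ × EuclideanSpace ℝ (Fin n)) + b * ((∑ i, pd (dirS n i) (pd (dirS n i) (Function.uncurry u)) ((τ, x) : ℝ × EuclideanSpace ℝ (Fin n))) - (∑ i, (pd (dirS n i) (Function.uncurry u) ((τ, x) : ℝ × EuclideanSpace ℝ (Fin n))) ^ 2) - c * S τ x - γ * u τ x) * τ⁻¹ - b * u τ x * (τ ^ 2)⁻¹ - d * (n:ℝ) * (τ ^ 2)⁻¹ := by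
    simp only [hGd]
    rw [pd_add (((((dA hp).const_mul α).fun_sub ((dB hp).const_mul β)).fun_add ((dSm hp).const_mul a)).fun_add (((dU hp).const_mul b).fun_mul (dInv hp))) ((dInv hp).const_mul (d * (n:ℝ))),
        pd_add ((((dA hp).const_mul α).fun_sub ((dB hp).const_mul β)).fun_add ((dSm hp).const_mul a)) (((dU hp).const_mul b).fun_mul (dInv hp)),
        pd_add (((dA hp).const_mul α).fun_sub ((dB hp).const_mul β)) ((dSm hp).const_mul a),
        pd_sub ((dA hp).const_mul α) ((dB hp).const_mul β),
        pd_const_mul (dA hp) α, pd_const_mul (dB hp) β, pd_const_mul (dSm hp) a,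
        pd_mul_inv_fst ((dU hp).const_mul b) hτ0',
        pd_const_mul_inv_fst (d * (n:ℝ)) hτ0',
        pd_const_mul (dU hp) b,
        EA _ hp, EB _ hp, hPDE hp, Pval]
    rw [Finset.sum_congr rfl fun i _ => (symPP i).trans (hαi i),
        Finset.sum_congr rfl fun i _ => hβi i]
    simp only [dirT_fst, mul_one]
    simp only [Finset.sum_sub_distrib, Finset.sum_add_distrib, ← Finset.mul_sum,
      Function.uncurry_apply_pair]
    ring
  have eSlapG : (∑ i, pd (dirS n i) (pd (dirS n i) G) ((τ, x) : ℝ × EuclideanSpace ℝ (Fin n))) = α * (∑ i, ∑ j, pd (dirS n i) (pd (dirS n i) (pd (dirS n j) (pd (dirS n j) (Function.uncurry u)))) ((τ, x) : ℝ × EuclideanSpace ℝ (Fin n))) - β * (2 * ((∑ i, ∑ j, pd (dirS n j) (Function.uncurry u) ((τ, x) : ℝ × EuclideanSpace ℝ (Fin n)) * pd (dirS n i) (pd (dirS n i) (pd (dirS n j) (Function.uncurry u))) ((τ, x) : ℝ × EuclideanSpace ℝ (Fin n))) + (∑ i, ∑ j, (pd (dirS n i) (pd (dirS n j) (Function.uncurry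 u)) ((τ, x) : ℝ × EuclideanSpace ℝ (Fin n))) ^ 2))) + a * (∑ i, pd (dirS n i) (pd (dirS n i) (Function.uncurry S)) ((τ, x) : ℝ × EuclideanSpace ℝ (Fin n))) + b * τ⁻¹ * (∑ i, pd (dirS n i) (pd (dirS n i) (Function.uncurry u)) ((τ, x) : ℝ × EuclideanSpace ℝ (Fin n))) := by
    have h1 : ∀ i : Fin n, pd (dirS n i) (pd (dirS n i) G) ((τ, x) : ℝ × EuclideanSpace ℝ (Fin n)) = α * (∑ j, pd (dirS n i) (pd (dirS n i) (pd (dirS n j) (pd (dirS n j) (Function.uncurry u)))) ((τ, x) : ℝ × EuclideanSpace ℝ (Fin n))) - β * (2 * ((∑ j, pd (dirS n j) (Function.uncurry u) ((τ, x) : ℝ × EuclideanSpace ℝ (Fin n)) * pd (dirS n i) (pd (dirS n i) (pd (dirS n j) (Function.uncurry u))) ((τ, x) : ℝ × EuclideanSpace ℝ (Fin n))) + (∑ j, (pd (dirS n i) (pd (dirS n j) (Function.uncurry u)) ((τ, x) : ℝ × EuclideanSpace ℝ (Fin n))) ^ 2))) + a * pd (dirS n i) (pd (dirS n i) (Function.uncurry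 S)) ((τ, x) : ℝ × EuclideanSpace ℝ (Fin n)) + b * τ⁻¹ * pd (dirS n i) (pd (dirS n i) (Function.uncurry u)) ((τ, x) : ℝ × EuclideanSpace ℝ (Fin n)) := fun i => (pd_congrOn hΩ (hpdG i) hp).trans (ER i)
    rw [Finset.sum_congr rfl fun i _ => h1 i]
    simp only [Finset.sum_sub_distrib, Finset.sum_add_distrib, ← Finset.mul_sum]
  have eInner : (∑ i, pd (dirS n i) G ((τ, x) : ℝ × EuclideanSpace ℝ (Fin n)) * pd (dirS n i) (Function.uncurry u) ((τ, x) : ℝ × EuclideanSpace ℝ (Fin n))) = α * (∑ i, pd (dirS n i) (Function.uncurry u) ((τ, x) : ℝ × EuclideanSpace ℝ (Fin n)) * (∑ j, pd (dirS n i) (pd (dirS n j) (pd (dirS n j) (Function.uncurry u))) ((τ, x) : ℝ × EuclideanSpace ℝ (Fin n)))) - 2 * β * (∑ i, pd (dirS n i) (Function.uncurry u) ((τ, x) : ℝ × EuclideanSpace ℝ (Fin n)) * (∑ j, pd (dirS n j) (Function.uncurry u) ((τ, x) : ℝ × EuclideanSpace ℝ (Fin n)) * pd (dirS n i) (pd (dirS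 n j) (Function.uncurry u)) ((τ, x) : ℝ × EuclideanSpace ℝ (Fin n)))) + a * (∑ i, pd (dirS n i) (Function.uncurry S) ((τ, x) : ℝ × EuclideanSpace ℝ (Fin n)) * pd (dirS n i) (Function.uncurry u) ((τ, x) : ℝ × EuclideanSpace ℝ (Fin n))) + b * τ⁻¹ * (∑ i, (pd (dirS n i) (Function.uncurry u) ((τ, x) : ℝ × EuclideanSpace ℝ (Fin n))) ^ 2) := by
    have h2 : ∀ i : Fin n, pd (dirS n i) G ((τ, x) : ℝ × EuclideanSpace ℝ (Fin n)) * pd (dirS n i) (Function.uncurry u) ((τ, x) : ℝ × EuclideanSpace ℝ (Fin n)) = α * (pd (dirS n i) (Function.uncurry u) ((τ, x) : ℝ × EuclideanSpace ℝ (Fin n)) * (∑ j, pd (dirS n i) (pd (dirS n j) (pd (dirS n j) (Function.uncurry u))) ((τ, x) : ℝ × EuclideanSpace ℝ (Fin n)))) - 2 * β * (pd (dirS n i) (Function.uncurry u) ((τ, x) : ℝ × EuclideanSpace ℝ (Fin n)) * (∑ j, pd (dirS n j) (Function.uncurry u) ((τ, x) : ℝ × EuclideanSpace ℝ (Fin n))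 * pd (dirS n i) (pd (dirS n j) (Function.uncurry u)) ((τ, x) : ℝ × EuclideanSpace ℝ (Fin n)))) + a * (pd (dirS n i) (Function.uncurry S) ((τ, x) : ℝ × EuclideanSpace ℝ (Fin n)) * pd (dirS n i) (Function.uncurry u) ((τ, x) : ℝ × EuclideanSpace ℝ (Fin n))) + b * τ⁻¹ * (pd (dirS n i) (Function.uncurry u) ((τ, x) : ℝ × EuclideanSpace ℝ (Fin n))) ^ 2 := by
      intro i
      rw [hpdG i hp, Rval i]
      ring
    rw [Finset.sum_congr rfl fun i _ => h2 i]
    simp only [Finset.sum_sub_distrib, Finset.sum_add_distrib, ← Finset.mul_sum]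
  have hID2 : (∑ i, ∑ j, pd (dirS n j) (Function.uncurry u) ((τ, x) : ℝ × EuclideanSpace ℝ (Fin n)) * pd (dirS n i) (pd (dirS n i) (pd (dirS n j) (Function.uncurry u))) ((τ, x) : ℝ × EuclideanSpace ℝ (Fin n))) = (∑ i, pd (dirS n i) (Function.uncurry u) ((τ, x) : ℝ × EuclideanSpace ℝ (Fin n)) * (∑ j, pd (dirS n i) (pd (dirS n j) (pd (dirS n j) (Function.uncurry u))) ((τ, x) : ℝ × EuclideanSpace ℝ (Fin n)))) := by
    rw [Finset.sum_comm]
    refine Finset.sum_congr rfl fun i _ => ?_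
    calc (∑ j, pd (dirS n i) (Function.uncurry u) ((τ, x) : ℝ × EuclideanSpace ℝ (Fin n)) * pd (dirS n j) (pd (dirS n j) (pd (dirS n i) (Function.uncurry u))) ((τ, x) : ℝ × EuclideanSpace ℝ (Fin n)))
        = ∑ j, pd (dirS n i) (Function.uncurry u) ((τ, x) : ℝ × EuclideanSpace ℝ (Fin n)) * pd (dirS n i) (pd (dirS n j) (pd (dirS n j) (Function.uncurry u))) ((τ, x) : ℝ × EuclideanSpace ℝ (Fin n)) := Finset.sum_congr rfl fun j _ => by rw [sym3 i j]
      _ = pd (dirS n i) (Function.uncurry u) ((τ, x) : ℝ × EuclideanSpace ℝ (Fin n)) * (∑ j, pd (dirS n i) (pd (dirS n j) (pd (dirS n j) (Function.uncurry u))) ((τ, x) : ℝ × EuclideanSpace ℝ (Fin n))) := (Finset.mul_sum _ _ _).symm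
  -- translate the goal and finish
  rw [tderiv_pd cdH hτ x, slap_pd cdH hτ x, inner_sgrad_pd cdH hu hτ x,
      inner_sgrad_pd hS hu hτ x, hessSq_pd hu hτ x, norm_sgrad_pd hu hτ x,
      tderiv_pd hS hτ x, slap_pd hS hτ x, slap_pd hu hτ x]
  have eTH : pd (dirT n) (Function.uncurry H) ((τ, x) : ℝ × EuclideanSpace ℝ (Fin n)) = pd (dirT n) G ((τ, x) : ℝ × EuclideanSpace ℝ (Fin n)) := pd_congrOn hΩ hHG hp
  have eΔH : (∑ i, pd (dirS n i) (pd (dirS n i) (Function.uncurry H)) ((τ, x) : ℝ × EuclideanSpace ℝ (Fin n))) = ∑ i, pd (dirS n i) (pd (dirS n i) G) ((τ, x) : ℝ × EuclideanSpace ℝ (Fin n)) := Finset.sum_congr rfl fun i _ => pd2_congrOn hΩ hHG hp (dirS n i)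
  have eIH : (∑ i, pd (dirS n i) (Function.uncurry H) ((τ, x) : ℝ × EuclideanSpace ℝ (Fin n)) * pd (dirS n i) (Function.uncurry u) ((τ, x) : ℝ × EuclideanSpace ℝ (Fin n))) = ∑ i, pd (dirS n i) G ((τ, x) : ℝ × EuclideanSpace ℝ (Fin n)) * pd (dirS n i) (Function.uncurry u) ((τ, x) : ℝ × EuclideanSpace ℝ (Fin n)) := Finset.sum_congr rfl fun i _ => by rw [pd_congrOn hΩ hHG hp]
  rw [eTH, eΔH, eIH, eL, eSlapG, eInner, hID2]
  ring
end
end
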